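/- arXiv:2009.00129 — 6 statements merged into one kernel-verified Lean document; each statement's English description precedes it below -/
import Mathlib

section
/- Let V be a free Z_p-submodule of Z_p^n. If V admits an orthonormal basis, then every basis of V is orthonormal. -/
/-- A finite family of vectors in `ℤ_p^n` is orthonormal if each vector has sup-norm `1`
and the norm of any `ℚ_p`-linear combination is the maximum of the norms of the
coefficients. -/
def IsOrthonormalFam {p : ℕ} [Fact p.Prime] {n : ℕ} {ι : Type*} [Fintype ι]
    (x : ι → Fin n → ℤ_[p]) : Prop :=
  (∀ j, (⨆ i, ‖x j i‖) = 1) ∧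
  ∀ lam : ι → ℚ_[p], (⨆ i, ‖∑ j, lam j * (x j i : ℚ_[p])‖) = ⨆ j, ‖lam j‖

/-!
Orthonormality of a family says exactly that the `ℚ_p`-linear map sending a coefficient vector
to the combination of the family is an isometry for the sup norms; the unit-norm condition is
that isometry evaluated at the standard basis vectors. The change of basis matrix between two
bases of `V` and its inverse both have entries in `ℤ_p`, so by the ultrametric inequality
neither can increase the sup norm of a coefficient vector, and both are isometries. Composing
with the isometry given by the orthonormal basis gives the isometry for the other basis.
-/

open Matrix

theorem Pi.iSup_norm_eq_norm {ι E : Type*} [Fintype ι] [SeminormedAddCommGroup E]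
    (f : ι → E) : (⨆ i, ‖f i‖) = ‖f‖ :=
  le_antisymm (Real.iSup_le (norm_le_pi_norm f) (norm_nonneg f))
    ((pi_norm_le_iff_of_nonneg (Real.iSup_nonneg fun i => norm_nonneg (f i))).mpr
      fun i => le_ciSup (f := fun i => ‖f i‖) (Set.finite_range _).bddAbove i)

section Ultrametric

variable {K : Type*} [NormedField K] [IsUltrametricDist K] {ι κ : Type*} [Fintype ι] [Fintype κ]

theorem norm_vecMul_le_of_norm_entry_le_one (v : ι → K) {A : Matrix ι κ K}
    (hA : ∀ i j, ‖A i j‖ ≤ 1) : ‖v ᵥ* A‖ ≤ ‖v‖ := by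
  refine (pi_norm_le_iff_of_nonneg (norm_nonneg v)).mpr fun j => ?_
  refine IsUltrametricDist.norm_sum_le_of_forall_le_of_nonneg (norm_nonneg v) fun i _ => ?_
  calc ‖v i * A i j‖ = ‖v i‖ * ‖A i j‖ := norm_mul _ _
    _ ≤ ‖v‖ * 1 := mul_le_mul (norm_le_pi_norm v i) (hA i j) (norm_nonneg _) (norm_nonneg v)
    _ = ‖v‖ := mul_one _

theorem norm_vecMul_eq_of_mul_eq_one [DecidableEq ι] (v : ι → K) {A : Matrix ι κ K}
    {B : Matrix κ ι K} (hAB : A * B = 1) (hA : ∀ i j, ‖A i j‖ ≤ 1) (hB : ∀ i j, ‖B i j‖ ≤ 1) :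
    ‖v ᵥ* A‖ = ‖v‖ := by
  refine le_antisymm (norm_vecMul_le_of_norm_entry_le_one v hA) ?_
  calc ‖v‖ = ‖v ᵥ* A ᵥ* B‖ := by rw [vecMul_vecMul, hAB, vecMul_one]
    _ ≤ ‖v ᵥ* A‖ := norm_vecMul_le_of_norm_entry_le_one _ hB

end Ultrametric

section Padic

variable {p : ℕ} [Fact p.Prime] {n : ℕ}

theorem PadicInt.norm_map_coe_apply_le_one {m k : Type*} (A : Matrix m k ℤ_[p]) (i : m) (j : k) :
    ‖A.map PadicInt.Coe.ringHom i j‖ ≤ 1 :=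
  PadicInt.norm_le_one (A i j)

theorem isOrthonormalFam_iff_norm_vecMul_eq {ι : Type*} [Fintype ι] (x : ι → Fin n → ℤ_[p]) :
    IsOrthonormalFam x ↔ ∀ v : ι → ℚ_[p], ‖v ᵥ* (of x).map PadicInt.Coe.ringHom‖ = ‖v‖ := by
  classical
  have hcomb : ∀ v : ι → ℚ_[p],
      (⨆ i, ‖∑ j, v j * (x j i : ℚ_[p])‖) = ‖v ᵥ* (of x).map PadicInt.Coe.ringHom‖ :=
    fun v => Pi.iSup_norm_eq_norm (v ᵥ* (of x).map PadicInt.Coe.ringHom)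
  simp only [IsOrthonormalFam, hcomb, Pi.iSup_norm_eq_norm]
  refine ⟨And.right, fun h => ⟨fun j => ?_, h⟩⟩
  have hrow := h (Pi.single j 1)
  rw [single_one_vecMul, Pi.norm_single, norm_one] at hrow
  calc ‖x j‖ = ⨆ i, ‖x j i‖ := (Pi.iSup_norm_eq_norm _).symm
    _ = ⨆ i, ‖(of x).map PadicInt.Coe.ringHom j i‖ := rfl
    _ = 1 := (Pi.iSup_norm_eq_norm _).trans hrow

theorem Module.Basis.of_coe_eq_transpose_toMatrix_mul {V : Submodule ℤ_[p] (Fin n → ℤ_[p])}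
    {ι₀ ι : Type*} [Fintype ι₀] (b₀ : Module.Basis ι₀ ℤ_[p] V) (b : Module.Basis ι ℤ_[p] V) :
    of (fun j => (b j : Fin n → ℤ_[p])) =
      (b₀.toMatrix b)ᵀ * of (fun k => (b₀ k : Fin n → ℤ_[p])) := by
  ext j i
  have hexp := congrArg (fun w : V => (w : Fin n → ℤ_[p]) i) (b₀.sum_repr (b j))
  simp only [Submodule.coe_sum, Submodule.coe_smul, Finset.sum_apply, Pi.smul_apply,
    smul_eq_mul] at hexp
  simp [mul_apply, Module.Basis.toMatrix_apply, hexp]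

end Padic

/-- if a free `ℤ_p`-submodule of `ℤ_p^n` admits an orthonormal basis,
then every (finite) basis of it is orthonormal. -/
theorem statement3 {p : ℕ} [Fact p.Prime] {n : ℕ}
    (V : Submodule ℤ_[p] (Fin n → ℤ_[p]))
    {ι₀ : Type*} [Fintype ι₀] (b₀ : Module.Basis ι₀ ℤ_[p] V)
    (hb₀ : IsOrthonormalFam (fun j => (b₀ j : Fin n → ℤ_[p])))
    {ι : Type*} [Fintype ι] (b : Module.Basis ι ℤ_[p] V) :
    IsOrthonormalFam (fun j => (b j : Fin n → ℤ_[p])) := by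
  classical
  rw [isOrthonormalFam_iff_norm_vecMul_eq] at hb₀ ⊢
  intro v
  have hinv : (b₀.toMatrix b)ᵀ.map PadicInt.Coe.ringHom * (b.toMatrix b₀)ᵀ.map PadicInt.Coe.ringHom
      = 1 := by
    rw [← Matrix.map_mul, ← transpose_mul, Module.Basis.toMatrix_mul_toMatrix_flip, transpose_one,
      Matrix.map_one _ (map_zero _) (map_one _)]
  rw [b₀.of_coe_eq_transpose_toMatrix_mul b, Matrix.map_mul, ← vecMul_vecMul, hb₀]
  exact norm_vecMul_eq_of_mul_eq_one v hinv (PadicInt.norm_map_coe_apply_le_one _)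
    (PadicInt.norm_map_coe_apply_le_one _)
end

section
/- Let m be an ideal of Z_p and N ≥ 1. Suppose ȳ ∈ Z_p^n, x̄ ∈ (Z_p/m)^n, and M̄ ∈ M_n(Z_p/m) are such that x̄ has at least one unit coordinate and x̄·M̄ equals the reduction of ȳ modulo m. Then there exist lifts x ∈ Z_p^n of x̄ and M ∈ M_n(Z_p) of M̄ such that x·M = ȳ. -/
set_option synthInstance.maxHeartbeats 1000000
set_option maxHeartbeats 1000000

/-- Bilinear Lemma, specialized: given an ideal `m ⊆ ℤ_p`, a vector
`y ∈ ℤ_p^n`, and `x̄`, `M̄` over `ℤ_p/m` with `x̄` having a unit coordinate and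
`x̄ ⬝ M̄` equal to the reduction of `y`, there exist lifts `x`, `M` with `x ⬝ M = y`. -/
theorem statement5 {p : ℕ} [Fact p.Prime] {n : ℕ}
    (m : Ideal ℤ_[p]) (y : Fin n → ℤ_[p])
    (xbar : Fin n → ℤ_[p] ⧸ m) (Mbar : Matrix (Fin n) (Fin n) (ℤ_[p] ⧸ m))
    (hunit : ∃ i, IsUnit (xbar i))
    (heq : ∀ j, (∑ i, xbar i * Mbar i j) = Ideal.Quotient.mk m (y j)) :
    ∃ (x : Fin n → ℤ_[p]) (M : Matrix (Fin n) (Fin n) ℤ_[p]),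
      (∀ i, Ideal.Quotient.mk m (x i) = xbar i) ∧
      (∀ i j, Ideal.Quotient.mk m (M i j) = Mbar i j) ∧
      (∀ j, (∑ i, x i * M i j) = y j) := by
  obtain ⟨i₀, hu⟩ := hunit
  by_cases hm : m = ⊤
  · subst hm
    haveI : Subsingleton (ℤ_[p] ⧸ (⊤ : Ideal ℤ_[p])) :=
      Ideal.Quotient.subsingleton_iff.mpr rfl
    refine ⟨Pi.single i₀ 1, fun i j => if i = i₀ then y j else 0,
      fun i => Subsingleton.elim _ _, fun i j => Subsingleton.elim _ _, ?_⟩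
    intro j
    rw [Finset.sum_eq_single i₀]
    · simp
    · intro b _ hb; simp [Pi.single_eq_of_ne hb]
    · simp
  · have hle : m ≤ IsLocalRing.maximalIdeal ℤ_[p] := IsLocalRing.le_maximalIdeal hm
    choose x hx using fun i => Ideal.Quotient.mk_surjective (xbar i)
    choose M₀ hM₀ using fun i j => Ideal.Quotient.mk_surjective (Mbar i j)
    obtain ⟨b, hb⟩ := Ideal.Quotient.mk_surjective ((↑hu.unit⁻¹ : ℤ_[p] ⧸ m))
    have hmul : Ideal.Quotient.mk m (x i₀ * b) = 1 := by
      rw [map_mul, hx, hb]; exact hu.mul_val_inv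
    have hmem : x i₀ * b - 1 ∈ m :=
      Ideal.Quotient.eq.mp (hmul.trans (map_one _).symm)
    have hunit' : IsUnit (x i₀ * b) := by
      by_contra h
      have h1 : x i₀ * b ∈ IsLocalRing.maximalIdeal ℤ_[p] :=
        (IsLocalRing.mem_maximalIdeal _).mpr h
      have h2 : (1 : ℤ_[p]) ∈ IsLocalRing.maximalIdeal ℤ_[p] := by
        have := sub_mem h1 (hle hmem); simp at this
      exact (IsLocalRing.maximalIdeal.isMaximal ℤ_[p]).ne_top
        (Ideal.eq_top_of_isUnit_mem _ h2 isUnit_one)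
    have hx0 : IsUnit (x i₀) := isUnit_of_mul_isUnit_left hunit'
    obtain ⟨u, hu0⟩ := hx0
    set d : Fin n → ℤ_[p] := fun j => y j - ∑ i, x i * M₀ i j with hd
    have hdm : ∀ j, d j ∈ m := by
      intro j
      have h0 : Ideal.Quotient.mk m (d j) = 0 := by
        simp only [hd, map_sub, map_sum, map_mul, hx, hM₀, heq]
        ring
      rwa [Ideal.Quotient.eq_zero_iff_mem] at h0
    refine ⟨x, fun i j => M₀ i j + if i = i₀ then (↑u⁻¹ : ℤ_[p]) * d j else 0,
      hx, ?_, ?_⟩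
    · intro i j
      rw [map_add, hM₀]
      have hz : Ideal.Quotient.mk m (if i = i₀ then (↑u⁻¹ : ℤ_[p]) * d j else 0) = 0 := by
        split
        · rw [Ideal.Quotient.eq_zero_iff_mem]; exact Ideal.mul_mem_left _ _ (hdm j)
        · simp
      rw [hz, add_zero]
    · intro j
      rw [Finset.sum_congr rfl (fun i _ => mul_add (x i) _ _), Finset.sum_add_distrib]
      have hsum : ∑ i, x i * (if i = i₀ then (↑u⁻¹ : ℤ_[p]) * d j else 0) = d j := by
        rw [Finset.sum_eq_single i₀]
        · rw [if_pos rfl, ← mul_assoc, ← hu0, Units.mul_inv, one_mul]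
        · intro c _ hc; rw [if_neg hc, mul_zero]
        · simp
      rw [hsum, hd]; ring
end

section
/- Let M ∈ M_n(Z_p) be a block matrix M = [[A, C], [E, B]] with A of size a×a and B of size b×b, and suppose every entry of E is divisible by ε, where ε is a positive power of p. Suppose moreover that modulo p, χ_B(t) ≡ (t − λ)^b with χ_A(λ) ≢ 0 (mod p) for λ = 0. Then the characteristic polynomial χ_M factors in Z_p[t] as χ_M = χ_big · χ_small with χ_big ≡ χ_A (mod ε) and χ_small ≡ χ_B (mod ε); moreover this factorization into monic polynomials is unique modulo ε. -/
/-!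
Modulo `p`, `χ_M ≡ χ_A χ_B = G t^b` with `G(0)` a unit, so the Weierstrass preparation theorem
applied to `χ_M` splits off a distinguished factor lifting `t^b`; the cofactor is a polynomial by
uniqueness of Weierstrass division, and it lifts `G`. Any two monic polynomials lifting `G` and
`t^b` are coprime (their resultant is a unit because it is one modulo `p`), and over any commutative ring
a factorization `g h = g' h'` into monic polynomials with `g, h'` and `g', h` coprime is unique.
Applied over `ℤ_p / p^k`, this gives both the congruences mod `p^k` and the uniqueness.
-/

open Matrix Polynomial IsLocalRing

namespace Polynomial

theorem map_eq_map_iff_coeff_sub_mem_ker {R S : Type*} [CommRing R] [Ring S] {φ : R →+* S}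
    {q r : R[X]} : q.map φ = r.map φ ↔ ∀ i, (q - r).coeff i ∈ RingHom.ker φ := by
  rw [← sub_eq_zero, ← Polynomial.map_sub, ← coe_mapRingHom, ← RingHom.mem_ker, ker_mapRingHom,
    Ideal.mem_map_C_iff]

theorem map_mk_span_singleton_eq_iff {R : Type*} [CommRing R] {d : R} {q r : R[X]} :
    q.map (Ideal.Quotient.mk (Ideal.span {d})) = r.map (Ideal.Quotient.mk (Ideal.span {d})) ↔
      ∀ i, d ∣ (q - r).coeff i := by
  simp only [map_eq_map_iff_coeff_sub_mem_ker, Ideal.mk_ker, Ideal.mem_span_singleton]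

theorem Monic.isCoprime_of_isCoprime_map {R S : Type*} [CommRing R] [CommRing S] [Nontrivial S]
    (φ : R →+* S) [IsLocalHom φ] {f g : R[X]} (hf : f.Monic) (hg : g.Monic)
    (h : IsCoprime (f.map φ) (g.map φ)) : IsCoprime f g := by
  rw [← isUnit_resultant_iff_isCoprime hf]
  rw [← isUnit_resultant_iff_isCoprime (hf.map φ), hf.natDegree_map, hg.natDegree_map,
    resultant_map_map] at h
  exact h.of_map

theorem Monic.eq_of_dvd_of_dvd {R : Type*} [CommRing R] {g g' : R[X]} (hg : g.Monic)
    (hg' : g'.Monic) (h₁ : g ∣ g') (h₂ : g' ∣ g) : g = g' := by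
  nontriviality R
  obtain ⟨q, rfl⟩ := h₁
  obtain ⟨r, hr⟩ := h₂
  have hq := hg.of_mul_monic_left hg'
  have hr' := hg'.of_mul_monic_left (hr ▸ hg)
  have hdeg := congrArg natDegree hr
  rw [hg'.natDegree_mul hr', hg.natDegree_mul hq] at hdeg
  rw [eq_one_of_monic_natDegree_zero hq (by omega), mul_one]

theorem Monic.eq_of_mul_eq_mul_of_isCoprime {R : Type*} [CommRing R] {g h g' h' : R[X]}
    (hg : g.Monic) (hh : h.Monic) (hg' : g'.Monic) (hh' : h'.Monic)
    (hgh' : IsCoprime g h') (hg'h : IsCoprime g' h) (e : g * h = g' * h') : g = g' ∧ h = h' :=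
  ⟨hg.eq_of_dvd_of_dvd hg' (hgh'.dvd_of_dvd_mul_right ⟨h, e.symm⟩)
      (hg'h.dvd_of_dvd_mul_right ⟨h', e⟩),
    hh.eq_of_dvd_of_dvd hh' (hg'h.symm.dvd_of_dvd_mul_left ⟨g, by rw [e.symm, mul_comm]⟩)
      (hgh'.symm.dvd_of_dvd_mul_left ⟨g', by rw [e, mul_comm]⟩)⟩

theorem isCoprime_X_pow_of_coeff_zero_ne_zero {K : Type*} [Field K] {G : K[X]}
    (hG : G.coeff 0 ≠ 0) (b : ℕ) : IsCoprime G (X ^ b) :=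
  (irreducible_X.coprime_iff_not_dvd.mpr (X_dvd_iff.not.mpr hG)).symm.pow_right

theorem coeff_sub_dvd_of_coeff_sub_mul_dvd {R : Type*} [CommRing R] {d : R}
    {f g h g' h' : R[X]} (hg : g.Monic) (hh : h.Monic) (hg' : g'.Monic) (hh' : h'.Monic)
    (hgh' : IsCoprime g h') (hg'h : IsCoprime g' h) (hf : ∀ i, d ∣ (f - g * h).coeff i)
    (hf' : ∀ i, d ∣ (f - g' * h').coeff i) :
    (∀ i, d ∣ (g - g').coeff i) ∧ ∀ i, d ∣ (h - h').coeff i := by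
  set φ := Ideal.Quotient.mk (Ideal.span {d})
  simp only [← map_mk_span_singleton_eq_iff, Polynomial.map_mul] at hf hf' ⊢
  exact (hg.map φ).eq_of_mul_eq_mul_of_isCoprime (hh.map φ) (hg'.map φ) (hh'.map φ)
    (hgh'.map (mapRingHom φ)) (hg'h.map (mapRingHom φ)) (hf.symm.trans hf')

theorem eq_of_mul_X_pow_eq_mul_X_pow {R : Type*} [Semiring R] {p q : R[X]} {m n : ℕ}
    (hp : p.coeff 0 ≠ 0) (hq : q.coeff 0 ≠ 0) (e : p * X ^ m = q * X ^ n) : p = q ∧ m = n := by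
  have hp0 : p ≠ 0 := fun h => hp (by simp [h])
  have hq0 : q ≠ 0 := fun h => hq (by simp [h])
  have hmn : m = n := by
    have := congrArg natTrailingDegree e
    rwa [natTrailingDegree_mul_X_pow hp0, natTrailingDegree_mul_X_pow hq0,
      natTrailingDegree_eq_zero.mpr (.inr hp), natTrailingDegree_eq_zero.mpr (.inr hq),
      zero_add, zero_add] at this
  subst hmn
  refine ⟨?_, rfl⟩
  ext i
  simpa using congrArg (coeff · (i + m)) e

theorem Monic.exists_eq_mul_of_map_residue_eq_mul_X_pow {A : Type*} [CommRing A] [IsLocalRing A]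
    [IsAdicComplete (maximalIdeal A) A] {f : A[X]} (hf : f.Monic) {G : (ResidueField A)[X]}
    (hG : G.coeff 0 ≠ 0) {b : ℕ} (hfG : f.map (residue A) = G * X ^ b) :
    ∃ g h : A[X], g.Monic ∧ h.Monic ∧ f = g * h ∧ g.map (residue A) = G ∧
      h.map (residue A) = X ^ b := by
  have hF : (f : PowerSeries A).map (residue A) ≠ 0 := fun h => by
    simpa [hf.coeff_natDegree] using congrArg (PowerSeries.coeff f.natDegree) h
  obtain ⟨D, U, hD, hU, hFDU⟩ := PowerSeries.exists_isWeierstrassFactorization hF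
  have hord : ((D : PowerSeries A).map (Ideal.Quotient.mk (maximalIdeal A))).order.toNat =
      D.natDegree := by
    rw [← hD.coe_natDegree_eq_order_map (D : PowerSeries A) 1 (by simp) (mul_one _).symm]
    rfl
  -- `D * (f /ₘ D) + f %ₘ D` and `D * U + 0` are both Weierstrass divisions of `f` by `D`
  obtain ⟨hqU, hr⟩ := hD.isWeierstrassDivisorAt'.eq_of_mul_add_eq_mul_add
    (q := ((f /ₘ D : A[X]) : PowerSeries A)) (r := f %ₘ D) (q' := U) (r' := 0)
    (by rw [hord, ← degree_eq_natDegree hD.monic.ne_zero]; exact degree_modByMonic_lt _ hD.monic)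
    (by simp)
    (by rw [← Polynomial.coe_mul, ← Polynomial.coe_add, add_comm, modByMonic_add_div, hFDU,
      Polynomial.coe_zero, add_zero])
  set q := f /ₘ D
  have hfq : f = D * q := by
    simpa [hr] using (modByMonic_add_div f D).symm
  have hq : q.Monic := hD.monic.of_mul_monic_left (hfq ▸ hf)
  have hq0 : (q.map (residue A)).coeff 0 ≠ 0 := by
    rw [coeff_map, residue_ne_zero_iff_isUnit]
    rw [← hqU, PowerSeries.isUnit_iff_constantCoeff] at hU
    simpa using hU
  have hDX : D.map (residue A) = X ^ D.natDegree := hD.map_eq_X_pow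
  obtain ⟨hqG, hdb⟩ := eq_of_mul_X_pow_eq_mul_X_pow (m := D.natDegree) (n := b) hq0 hG
    (by rw [← hDX, ← Polynomial.map_mul, mul_comm, ← hfq, hfG])
  exact ⟨q, D, hq, hD.monic, by rw [hfq, mul_comm], hqG, hdb ▸ hDX⟩

end Polynomial

theorem Matrix.coeff_charpoly_fromBlocks_sub_mul_dvd {R m n : Type*} [CommRing R] [Fintype m]
    [Fintype n] [DecidableEq m] [DecidableEq n] {d : R} (A : Matrix m m R) (C : Matrix m n R)
    (E : Matrix n m R) (B : Matrix n n R) (hE : ∀ i j, d ∣ E i j) (i : ℕ) :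
    d ∣ ((fromBlocks A C E B).charpoly - A.charpoly * B.charpoly).coeff i := by
  revert i
  rw [← map_mk_span_singleton_eq_iff]
  have hE0 : E.map (Ideal.Quotient.mk (Ideal.span {d})) = 0 := by
    ext i j
    exact Ideal.Quotient.eq_zero_iff_mem.mpr (Ideal.mem_span_singleton.mpr (hE i j))
  rw [Polynomial.map_mul, ← charpoly_map, ← charpoly_map, ← charpoly_map, fromBlocks_map, hE0,
    charpoly_fromBlocks_zero₂₁]

theorem PadicInt.map_residue_eq_map_residue_iff {p : ℕ} [Fact p.Prime] {q r : ℤ_[p][X]} :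
    q.map (residue ℤ_[p]) = r.map (residue ℤ_[p]) ↔ ∀ i, (p : ℤ_[p]) ∣ (q - r).coeff i := by
  simp only [map_eq_map_iff_coeff_sub_mem_ker, ker_residue, PadicInt.maximalIdeal_eq_span_p,
    Ideal.mem_span_singleton]

/-- for a size-sorted block matrix `M = [[A, C], [E, B]]` with `E ≡ 0 mod ε`
(`ε = p^k` a positive power of `p`), `χ_B ≡ t^b mod p`, and `χ_A(0) ≢ 0 mod p`, the
characteristic polynomial factors as `χ_M = χ_big ⋅ χ_small` in `ℤ_p[t]` with
`χ_big ≡ χ_A` and `χ_small ≡ χ_B (mod ε)`, and this factorization into monic polynomials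
is unique modulo `ε`. -/
theorem statement9 {p : ℕ} [Fact p.Prime] {a b : ℕ}
    (A : Matrix (Fin a) (Fin a) ℤ_[p]) (C : Matrix (Fin a) (Fin b) ℤ_[p])
    (E : Matrix (Fin b) (Fin a) ℤ_[p]) (B : Matrix (Fin b) (Fin b) ℤ_[p])
    (k : ℕ) (hk : 1 ≤ k)
    (hE : ∀ i j, (p : ℤ_[p]) ^ k ∣ E i j)
    (hB : B.charpoly.map (PadicInt.toZMod) = X ^ b)
    (hA : PadicInt.toZMod (A.charpoly.eval 0) ≠ 0) :
    ∃ χbig χsmall : Polynomial ℤ_[p],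
      χbig.Monic ∧ χsmall.Monic ∧
      (Matrix.fromBlocks A C E B).charpoly = χbig * χsmall ∧
      (∀ i, (p : ℤ_[p]) ^ k ∣ (χbig - A.charpoly).coeff i) ∧
      (∀ i, (p : ℤ_[p]) ^ k ∣ (χsmall - B.charpoly).coeff i) ∧
      ∀ g h : Polynomial ℤ_[p], g.Monic → h.Monic →
        (∀ i, (p : ℤ_[p]) ^ k ∣ ((Matrix.fromBlocks A C E B).charpoly - g * h).coeff i) →
        (∀ i, (p : ℤ_[p]) ∣ (g - A.charpoly).coeff i) →
        (∀ i, (p : ℤ_[p]) ∣ (h - B.charpoly).coeff i) →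
        (∀ i, (p : ℤ_[p]) ^ k ∣ (g - χbig).coeff i) ∧
        (∀ i, (p : ℤ_[p]) ^ k ∣ (h - χsmall).coeff i) := by
  have hp : (p : ℤ_[p]) ∣ (p : ℤ_[p]) ^ k := dvd_pow_self _ (by omega)
  have hχM := coeff_charpoly_fromBlocks_sub_mul_dvd A C E B hE
  set G := A.charpoly.map (residue ℤ_[p])
  have hG : G.coeff 0 ≠ 0 := by
    rwa [coeff_map, coeff_zero_eq_eval_zero, ne_eq, ← RingHom.mem_ker, ker_residue,
      ← PadicInt.ker_toZMod, RingHom.mem_ker]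
  have hB' : B.charpoly.map (residue ℤ_[p]) = X ^ b := by
    rw [← Polynomial.map_X (residue ℤ_[p]), ← Polynomial.map_pow, map_eq_map_iff_coeff_sub_mem_ker,
      ker_residue, ← PadicInt.ker_toZMod, ← map_eq_map_iff_coeff_sub_mem_ker, hB]
    simp
  have hcop : ∀ g h : ℤ_[p][X], g.Monic → h.Monic → g.map (residue ℤ_[p]) = G →
      h.map (residue ℤ_[p]) = X ^ b → IsCoprime g h := fun g h hg hh hgG hhX =>
    hg.isCoprime_of_isCoprime_map _ hh (hgG ▸ hhX ▸ isCoprime_X_pow_of_coeff_zero_ne_zero hG b)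
  have hχMmod : (fromBlocks A C E B).charpoly.map (residue ℤ_[p]) = G * X ^ b := by
    rw [← hB', ← Polynomial.map_mul, PadicInt.map_residue_eq_map_residue_iff]
    exact fun i => hp.trans (hχM i)
  obtain ⟨χbig, χsmall, hbig, hsmall, hfac, hbigG, hsmallX⟩ :=
    (charpoly_monic _).exists_eq_mul_of_map_residue_eq_mul_X_pow hG hχMmod
  obtain ⟨hbigA, hsmallB⟩ := coeff_sub_dvd_of_coeff_sub_mul_dvd hbig hsmall
    A.charpoly_monic B.charpoly_monic (hcop _ _ hbig B.charpoly_monic hbigG hB')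
    (hcop _ _ A.charpoly_monic hsmall rfl hsmallX) (by simp [hfac]) hχM
  refine ⟨χbig, χsmall, hbig, hsmall, hfac, hbigA, hsmallB, fun g h hg hh hgh hgA hhB => ?_⟩
  rw [← PadicInt.map_residue_eq_map_residue_iff] at hgA hhB
  exact coeff_sub_dvd_of_coeff_sub_mul_dvd hg hh hbig hsmall
    (hcop _ _ hg hsmall hgA hsmallX) (hcop _ _ hbig hh hbigG (hhB.trans hB')) hgh (by simp [hfac])
end

section
/- Let M ∈ M_n(Z_p) be an upper Hessenberg matrix of the form M = [A; ε, B] (block upper Hessenberg with A of size n_A, B of size n_B, and the only nonzero entry of the lower-left block being ε in position (n_A+1, n_A)), size-sorted so that all eigenvalues of A are units mod p and χ_B(t) ≡ t^{n_B} mod p, and let μ ∈ ε·Z_p. Write M − μI = Q_M R_M and B − μI = Q_B R_B as QR-factorizations. Then Q_M is block upper triangular modulo ε, and with M' := R_M Q_M + μI =: [A'; ε', B'] and α := the (n_A+1, n_A+1) entry of R_M, one has |ε'| = |ε|·|α| and |α| ≤ max{|ε|, |(R_B)_{1,1}|}. -/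
/-!
Write `N = M - μI = QU` (with `Q = Q_M`, `U = R_M`) in `a + b` blocks. As `U` is upper
triangular, `N₁₁ = Q₁₁U₁₁`, `N₂₁ = Q₂₁U₁₁` and `N₂₂ = Q₂₁U₁₂ + Q₂₂U₂₂`. Since the eigenvalues of
`A` are units and `μ ≡ 0 mod p`, `N₁₁ = A - μI` and hence `U₁₁` are invertible, so
`Q₂₁ = N₂₁U₁₁⁻¹ = ε · e₀ · (last row of U₁₁⁻¹)`: this is divisible by `ε` and vanishes outside
its first row. Therefore the new connecting entry is
`(UQ)_{a,a-1} = U_{a,a} Q_{a,a-1} = α ε (U₁₁⁻¹)_{a-1,a-1}`, whose last factor is the unit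
`(U₁₁)_{a-1,a-1}⁻¹`. Finally `Q` is block upper triangular mod `p`, so `Q₂₂` is invertible, and
the first column of `Q₂₂U₂₂ = Q_B R_B - Q₂₁U₁₂` puts `α` in the ideal `(ε, (R_B)₀₀)`.
-/

open Matrix Polynomial

lemma Fin.forall_of_forall_natAdd_castAdd {a b : ℕ} {P : Fin (a + b) → Fin (a + b) → Prop}
    (h : ∀ i j, P (Fin.natAdd a i) (Fin.castAdd b j)) {i j : Fin (a + b)} (hi : a ≤ (i : ℕ))
    (hj : (j : ℕ) < a) : P i j := by
  induction i using Fin.addCases with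
  | left i => exact absurd hi (by simp)
  | right i =>
    induction j using Fin.addCases with
    | left j => exact h i j
    | right j => simp at hj

namespace Matrix

variable {R : Type*} {a b : ℕ}

lemma submatrix_mul_fin_add [NonUnitalNonAssocSemiring R] {l m n o : Type*}
    (X : Matrix m (Fin (a + b)) R) (Y : Matrix (Fin (a + b)) n R) (r : l → m) (c : o → n) :
    (X * Y).submatrix r c = X.submatrix r (Fin.castAdd b) * Y.submatrix (Fin.castAdd b) c
      + X.submatrix r (Fin.natAdd a) * Y.submatrix (Fin.natAdd a) c := by
  ext i j
  simp [mul_apply, Fin.sum_univ_add]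

lemma one_submatrix_natAdd_castAdd [Zero R] [One R] :
    (1 : Matrix (Fin (a + b)) (Fin (a + b)) R).submatrix (Fin.natAdd a) (Fin.castAdd b) = 0 := by
  ext i j
  exact one_apply_ne (Fin.ne_of_val_ne (by simp only [Fin.val_natAdd, Fin.val_castAdd]; omega))

lemma BlockTriangular.submatrix_natAdd_castAdd [Zero R]
    {X : Matrix (Fin (a + b)) (Fin (a + b)) R} (hX : X.BlockTriangular id) :
    X.submatrix (Fin.natAdd a) (Fin.castAdd b) = 0 := by
  ext i j
  exact hX (Fin.lt_def.2 (by simp only [id, Fin.val_natAdd, Fin.val_castAdd]; omega))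

lemma BlockTriangular.mul_apply_of_forall_le {ι n : Type*} [LinearOrder ι] [Fintype ι]
    [NonUnitalNonAssocSemiring R] {X : Matrix ι ι R} (hX : X.BlockTriangular id)
    (Y : Matrix ι n R) {i : ι} (hi : ∀ k, k ≤ i) (j : n) : (X * Y) i j = X i i * Y i j :=
  mul_apply.trans <| Fintype.sum_eq_single i fun k hk => by
    rw [hX (lt_of_le_of_ne (hi k) hk), zero_mul]

lemma BlockTriangular.mul_apply_of_forall_ge {ι n : Type*} [LinearOrder ι] [Fintype ι]
    [NonUnitalNonAssocSemiring R] {X : Matrix ι ι R} (hX : X.BlockTriangular id)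
    (Y : Matrix n ι R) {j : ι} (hj : ∀ k, j ≤ k) (i : n) : (Y * X) i j = Y i j * X j j :=
  mul_apply.trans <| Fintype.sum_eq_single j fun k hk => by
    rw [hX (lt_of_le_of_ne' (hj k) hk), mul_zero]

lemma BlockTriangular.submatrix_castAdd [Zero R] {X : Matrix (Fin (a + b)) (Fin (a + b)) R}
    (hX : X.BlockTriangular id) :
    (X.submatrix (Fin.castAdd b) (Fin.castAdd b)).BlockTriangular id :=
  fun _ _ h => hX h

lemma BlockTriangular.mul_submatrix_castAdd [NonUnitalNonAssocSemiring R] {l m : Type*}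
    {U : Matrix (Fin (a + b)) (Fin (a + b)) R} (hU : U.BlockTriangular id)
    (Q : Matrix m (Fin (a + b)) R) (r : l → m) :
    (Q * U).submatrix r (Fin.castAdd b) =
      Q.submatrix r (Fin.castAdd b) * U.submatrix (Fin.castAdd b) (Fin.castAdd b) := by
  rw [submatrix_mul_fin_add, hU.submatrix_natAdd_castAdd, Matrix.mul_zero, add_zero]

lemma BlockTriangular.submatrix_natAdd_mul [NonUnitalNonAssocSemiring R] {l n : Type*}
    {U : Matrix (Fin (a + b)) (Fin (a + b)) R} (hU : U.BlockTriangular id)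
    (Q : Matrix (Fin (a + b)) n R) (c : l → n) :
    (U * Q).submatrix (Fin.natAdd a) c =
      U.submatrix (Fin.natAdd a) (Fin.natAdd a) * Q.submatrix (Fin.natAdd a) c := by
  rw [submatrix_mul_fin_add, hU.submatrix_natAdd_castAdd, Matrix.zero_mul, zero_add]

lemma mul_single_one_mul_apply [Semiring R] {l m n o : Type*} [Fintype m] [Fintype n]
    [DecidableEq m] [DecidableEq n] (X : Matrix l m R) (S : Matrix n o R) (i : m) (j : n)
    (i' : l) (k : o) : (X * (single i j (1 : R) * S)) i' k = X i' i * S j k := by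
  rw [← Matrix.mul_assoc, mul_apply, Fintype.sum_eq_single j fun x hx => by
    rw [mul_single_apply_of_ne _ _ _ _ _ hx, zero_mul], mul_single_apply_same, mul_one]

lemma submatrix_natAdd_castAdd_eq_single [Zero R] {M : Matrix (Fin (a + b)) (Fin (a + b)) R}
    {i₀ : Fin b} (hi₀ : (i₀ : ℕ) = 0) {j₀ : Fin a} (hj₀ : (j₀ : ℕ) = a - 1)
    (hE : ∀ i j : Fin (a + b), a ≤ (i : ℕ) → (j : ℕ) < a →
      ¬((i : ℕ) = a ∧ (j : ℕ) = a - 1) → M i j = 0) :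
    M.submatrix (Fin.natAdd a) (Fin.castAdd b) =
      single i₀ j₀ (M (Fin.natAdd a i₀) (Fin.castAdd b j₀)) := by
  refine Matrix.ext fun i j => ?_
  simp only [submatrix_apply, single, of_apply]
  split_ifs with hij
  · obtain ⟨rfl, rfl⟩ := hij
    rfl
  · refine hE _ _ (by simp) (by simp) fun h => hij ⟨?_, ?_⟩ <;> ext <;>
      simp only [Fin.val_natAdd, Fin.val_castAdd] at h <;> omega

section CommRing

variable [CommRing R]

lemma BlockTriangular.isUnit_det_submatrix_castAdd {U : Matrix (Fin (a + b)) (Fin (a + b)) R}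
    (hU : U.BlockTriangular id) (Q : Matrix (Fin (a + b)) (Fin (a + b)) R)
    (h : IsUnit ((Q * U).submatrix (Fin.castAdd b) (Fin.castAdd b)).det) :
    IsUnit (U.submatrix (Fin.castAdd b) (Fin.castAdd b)).det := by
  rw [hU.mul_submatrix_castAdd, det_mul] at h
  exact isUnit_of_mul_isUnit_right h

lemma BlockTriangular.isUnit_inv_apply_of_forall_le {ι : Type*} [LinearOrder ι] [Fintype ι]
    [DecidableEq ι] {X : Matrix ι ι R} (hX : X.BlockTriangular id) (hdet : IsUnit X.det)
    {i : ι} (hi : ∀ k, k ≤ i) : IsUnit (X⁻¹ i i) := by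
  have h : X i i * X⁻¹ i i = 1 := by
    rw [← hX.mul_apply_of_forall_le _ hi, mul_nonsing_inv X hdet, one_apply_eq]
  exact IsUnit.of_mul_eq_one_right _ h

lemma BlockTriangular.submatrix_natAdd_castAdd_eq_smul
    {Q U : Matrix (Fin (a + b)) (Fin (a + b)) R}
    (hU : U.BlockTriangular id) (hU₁₁ : IsUnit (U.submatrix (Fin.castAdd b) (Fin.castAdd b)).det)
    {i : Fin b} {j : Fin a} {c : R}
    (h : (Q * U).submatrix (Fin.natAdd a) (Fin.castAdd b) = single i j c) :
    Q.submatrix (Fin.natAdd a) (Fin.castAdd b) =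
      c • (single i j (1 : R) * (U.submatrix (Fin.castAdd b) (Fin.castAdd b))⁻¹) := by
  rw [hU.mul_submatrix_castAdd] at h
  rw [← Matrix.smul_mul, smul_single, smul_eq_mul, mul_one, ← h,
    mul_nonsing_inv_cancel_right _ _ hU₁₁]

lemma BlockTriangular.mul_add_smul_one_apply_natAdd_castAdd
    {Q U : Matrix (Fin (a + b)) (Fin (a + b)) R} (hU : U.BlockTriangular id)
    {i : Fin b} {j : Fin a} {c : R} {S : Matrix (Fin a) (Fin a) R}
    (hQ : Q.submatrix (Fin.natAdd a) (Fin.castAdd b) = c • (single i j (1 : R) * S)) (μ : R)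
    (i' : Fin b) (k : Fin a) :
    (U * Q + μ • 1) (Fin.natAdd a i') (Fin.castAdd b k) =
      c * (U (Fin.natAdd a i') (Fin.natAdd a i) * S j k) := by
  have h := congrFun₂ (hU.submatrix_natAdd_mul Q (Fin.castAdd b)) i' k
  have h1 := congrFun₂ (one_submatrix_natAdd_castAdd (R := R)) i' k
  simp only [hQ, Matrix.mul_smul, smul_apply, mul_single_one_mul_apply, submatrix_apply,
    zero_apply] at h h1
  simp only [add_apply, smul_apply, h, h1, smul_eq_mul, mul_zero, add_zero]

lemma diag_mem_span_pair_of_mul_eq {ι : Type*} [LinearOrder ι] [Fintype ι] [DecidableEq ι]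
    {X Y P T V : Matrix ι ι R} (hX : IsUnit X.det) (hT : T.BlockTriangular id) {c : R}
    (h : X * Y = P * T - c • V) {i : ι} (hi : ∀ k, i ≤ k) :
    Y i i ∈ Ideal.span {c, T i i} := by
  have hY : Y = X⁻¹ * P * T - c • (X⁻¹ * V) := by
    calc Y = X⁻¹ * (X * Y) := (nonsing_inv_mul_cancel_left X Y hX).symm
      _ = _ := by rw [h, Matrix.mul_sub, Matrix.mul_smul, Matrix.mul_assoc]
  refine Ideal.mem_span_pair.2 ⟨-(X⁻¹ * V) i i, (X⁻¹ * P) i i, ?_⟩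
  rw [hY, sub_apply, hT.mul_apply_of_forall_ge _ hi, smul_apply, smul_eq_mul]
  ring

end CommRing

section IsLocalRing

open IsLocalRing

variable [CommRing R] [IsLocalRing R]

lemma _root_.Polynomial.isUnit_eval_of_sub_mem_maximalIdeal (P : R[X]) {x y : R}
    (hy : IsUnit (P.eval y)) (hxy : x - y ∈ maximalIdeal R) : IsUnit (P.eval x) := by
  rw [← notMem_maximalIdeal] at hy ⊢
  intro hx
  have hdiff : P.eval x - P.eval y ∈ maximalIdeal R :=
    Ideal.mem_of_dvd _ (sub_dvd_eval_sub x y P) hxy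
  exact hy (by simpa using Ideal.sub_mem _ hx hdiff)

lemma isUnit_det_sub_smul_one {n : Type*} [Fintype n] [DecidableEq n] (A : Matrix n n R)
    (hA : IsUnit (A.charpoly.eval 0)) {μ : R} (hμ : μ ∈ maximalIdeal R) :
    IsUnit (A - μ • 1).det := by
  have h := A.charpoly.isUnit_eval_of_sub_mem_maximalIdeal hA (by simpa using hμ)
  rw [eval_charpoly, scalar_apply, ← smul_one_eq_diagonal] at h
  rw [← neg_sub, det_neg]
  exact (isUnit_neg_one.pow _).mul h

lemma isUnit_det_submatrix_natAdd {Q : Matrix (Fin (a + b)) (Fin (a + b)) R} (hQ : IsUnit Q.det)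
    (h : ∀ i j, Q (Fin.natAdd a i) (Fin.castAdd b j) ∈ maximalIdeal R) :
    IsUnit (Q.submatrix (Fin.natAdd a) (Fin.natAdd a)).det := by
  have h₂₁ : (Q.submatrix finSumFinEquiv finSumFinEquiv).toBlocks₂₁.map (residue R) = 0 := by
    ext i j
    exact (Ideal.Quotient.eq_zero_iff_mem).2 (h i j)
  rw [← residue_ne_zero_iff_isUnit] at hQ ⊢
  rw [← det_submatrix_equiv_self finSumFinEquiv,
    ← fromBlocks_toBlocks (Q.submatrix finSumFinEquiv finSumFinEquiv), RingHom.map_det,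
    RingHom.mapMatrix_apply, fromBlocks_map, h₂₁, det_fromBlocks_zero₂₁] at hQ
  rw [RingHom.map_det]
  exact right_ne_zero_of_mul hQ

lemma apply_natAdd_natAdd_mem_span_pair {Q U : Matrix (Fin (a + b)) (Fin (a + b)) R}
    (hQ : IsUnit Q.det) {c : R} (hc : c ∈ maximalIdeal R) {W : Matrix (Fin b) (Fin a) R}
    (hQ₂₁ : Q.submatrix (Fin.natAdd a) (Fin.castAdd b) = c • W)
    {Q' U' : Matrix (Fin b) (Fin b) R} (hU' : U'.BlockTriangular id)
    (h : (Q * U).submatrix (Fin.natAdd a) (Fin.natAdd a) = Q' * U') {i : Fin b}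
    (hi : ∀ k, i ≤ k) : U (Fin.natAdd a i) (Fin.natAdd a i) ∈ Ideal.span {c, U' i i} := by
  have hQ₂₂ := isUnit_det_submatrix_natAdd hQ fun i j => by
    have hij := congrFun₂ hQ₂₁ i j
    simp only [submatrix_apply, smul_apply, smul_eq_mul] at hij
    exact hij ▸ Ideal.mul_mem_right _ _ hc
  rw [submatrix_mul_fin_add, hQ₂₁, Matrix.smul_mul] at h
  exact diag_mem_span_pair_of_mul_eq hQ₂₂ hU' (eq_sub_of_add_eq' h) hi

end IsLocalRing

end Matrix

lemma PadicInt.toZMod_ne_zero_iff_isUnit {p : ℕ} [Fact p.Prime] (x : ℤ_[p]) :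
    PadicInt.toZMod x ≠ 0 ↔ IsUnit x := by
  rw [ne_eq, ← RingHom.mem_ker, PadicInt.ker_toZMod, IsLocalRing.notMem_maximalIdeal]

lemma PadicInt.norm_le_max_of_mem_span_pair {p : ℕ} [Fact p.Prime] {x y z : ℤ_[p]}
    (h : z ∈ Ideal.span {x, y}) : ‖z‖ ≤ max ‖x‖ ‖y‖ := by
  obtain ⟨c, d, rfl⟩ := Ideal.mem_span_pair.1 h
  refine (PadicInt.nonarchimedean _ _).trans (max_le_max ?_ ?_) <;>
    rw [norm_mul] <;> exact mul_le_of_le_one_left (norm_nonneg _) (PadicInt.norm_le_one _)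

/-- one QR-round applied to a size-sorted Hessenberg matrix
`M = [A; ε, B]` with small shift `μ ∈ ε·ℤ_p`. Writing `M - μI = Q_M R_M` and
`B - μI = Q_B R_B`, the matrix `Q_M` is block upper triangular modulo `ε`, and with
`M' := R_M Q_M + μI` and `α := (R_M)_{a,a}` (0-indexed), the new connecting entry
`ε' = M'_{a, a-1}` satisfies `|ε'| = |ε|·|α|` and `|α| ≤ max(|ε|, |(R_B)_{0,0}|)`. -/
theorem statement11 {p : ℕ} [Fact p.Prime] {a b : ℕ} (ha : 0 < a) (hb : 0 < b)
    (M : Matrix (Fin (a + b)) (Fin (a + b)) ℤ_[p])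
    -- the blocks A, B and the connecting entry ε
    (A : Matrix (Fin a) (Fin a) ℤ_[p])
    (hA : ∀ i j, A i j = M (Fin.castAdd b i) (Fin.castAdd b j))
    (B : Matrix (Fin b) (Fin b) ℤ_[p])
    (hB : ∀ i j, B i j = M (Fin.natAdd a i) (Fin.natAdd a j))
    (ε : ℤ_[p])
    (hε : ε = M ⟨a, by omega⟩ ⟨a - 1, by omega⟩)
    -- the lower-left block vanishes apart from ε (size-sortedness of the block shape)
    (hE : ∀ i j : Fin (a + b), a ≤ (i : ℕ) → (j : ℕ) < a →
      ¬((i : ℕ) = a ∧ (j : ℕ) = a - 1) → M i j = 0)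
    -- size-sorted: ε ≡ 0 mod p, χ_B ≡ t^b mod p, χ_A has only unit eigenvalues mod p
    (hεp : (p : ℤ_[p]) ∣ ε)
    (hχA : PadicInt.toZMod (A.charpoly.eval 0) ≠ 0)
    -- the shift
    (μ : ℤ_[p]) (hμ : ε ∣ μ)
    -- QR-factorizations of M - μI and B - μI
    (QM RM : Matrix (Fin (a + b)) (Fin (a + b)) ℤ_[p])
    (hQM : IsUnit QM)
    (hRM : ∀ i j : Fin (a + b), (j : ℕ) < (i : ℕ) → RM i j = 0)
    (hfacM : M - μ • (1 : Matrix (Fin (a + b)) (Fin (a + b)) ℤ_[p]) = QM * RM)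
    (QB RB : Matrix (Fin b) (Fin b) ℤ_[p])
    (hRB : ∀ i j : Fin b, (j : ℕ) < (i : ℕ) → RB i j = 0)
    (hfacB : B - μ • (1 : Matrix (Fin b) (Fin b) ℤ_[p]) = QB * RB) :
    -- Q_M is block upper triangular modulo ε
    (∀ i j : Fin (a + b), a ≤ (i : ℕ) → (j : ℕ) < a → ε ∣ QM i j) ∧
    -- |ε'| = |ε| ⋅ |α|
    ‖(RM * QM + μ • (1 : Matrix (Fin (a + b)) (Fin (a + b)) ℤ_[p]))
        (⟨a, by omega⟩ : Fin (a + b)) (⟨a - 1, by omega⟩ : Fin (a + b))‖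
      = ‖ε‖ * ‖RM (⟨a, by omega⟩ : Fin (a + b)) (⟨a, by omega⟩ : Fin (a + b))‖ ∧
    -- |α| ≤ max(|ε|, |(R_B)_{1,1}|)
    ‖RM (⟨a, by omega⟩ : Fin (a + b)) (⟨a, by omega⟩ : Fin (a + b))‖
      ≤ max ‖ε‖ ‖RB (⟨0, hb⟩ : Fin b) (⟨0, hb⟩ : Fin b)‖ := by
  classical
  have hU : RM.BlockTriangular id := fun i j h => hRM i j h
  have hεm : ε ∈ IsLocalRing.maximalIdeal ℤ_[p] := by
    rwa [PadicInt.maximalIdeal_eq_span_p, Ideal.mem_span_singleton]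
  have hN : ∀ {l o : Type} (r : l → Fin (a + b)) (c : o → Fin (a + b)),
      (QM * RM).submatrix r c = M.submatrix r c - μ • (1 : Matrix _ _ ℤ_[p]).submatrix r c := by
    intro l o r c
    rw [← hfacM]
    rfl
  have hdetU₁₁ : IsUnit (RM.submatrix (Fin.castAdd b) (Fin.castAdd b)).det := by
    refine hU.isUnit_det_submatrix_castAdd QM ?_
    rw [hN, submatrix_one _ (Fin.castAdd_injective a b),
      ← (Matrix.ext hA : A = M.submatrix (Fin.castAdd b) (Fin.castAdd b))]
    exact A.isUnit_det_sub_smul_one ((PadicInt.toZMod_ne_zero_iff_isUnit _).1 hχA)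
      (Ideal.mem_of_dvd _ hμ hεm)
  have hQ₂₁ := hU.submatrix_natAdd_castAdd_eq_smul hdetU₁₁ (c := ε) (i := ⟨0, hb⟩)
    (j := ⟨a - 1, by omega⟩) (by
      rw [hN, one_submatrix_natAdd_castAdd, smul_zero, sub_zero, hε]
      exact submatrix_natAdd_castAdd_eq_single rfl rfl hE)
  refine ⟨fun i j => Fin.forall_of_forall_natAdd_castAdd (P := fun i j => ε ∣ QM i j)
    fun i j => ⟨_, congrFun₂ hQ₂₁ i j⟩, ?_, ?_⟩
  · have hv := hU.submatrix_castAdd.isUnit_inv_apply_of_forall_le hdetU₁₁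
      (i := ⟨a - 1, by omega⟩) fun k => Fin.le_def.2 (Nat.le_sub_one_of_lt k.isLt)
    refine (congrArg norm (hU.mul_add_smul_one_apply_natAdd_castAdd hQ₂₁ μ ⟨0, hb⟩
      ⟨a - 1, by omega⟩)).trans ?_
    rw [norm_mul, norm_mul, PadicInt.isUnit_iff.1 hv, mul_one]
    rfl
  · refine PadicInt.norm_le_max_of_mem_span_pair (apply_natAdd_natAdd_mem_span_pair
      ((isUnit_iff_isUnit_det QM).1 hQM) hεm hQ₂₁ (Q' := QB) (fun i j h => hRB i j h) ?_
      fun k => Fin.le_def.2 (Nat.zero_le _))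
    rw [hN, submatrix_one _ (Fin.natAdd_injective _ _),
      ← (Matrix.ext hB : B = M.submatrix (Fin.natAdd a) (Fin.natAdd a)), hfacB]
end

section
/- Let M ∈ M_n(Z_p) be an upper Hessenberg matrix and for m ≥ 1 let P_M(m) := [e_1 | M e_1 | ... | M^{m−1} e_1] be the n×m matrix whose columns are the iterates of the first standard basis vector. Then P_M(m) is upper triangular, and for each 1 ≤ i ≤ n, the diagonal entry satisfies |P_M(m)_{i,i}| ≥ |P_M(m)_{i',j'}| for all i', j' ≥ i. -/
open Matrix Finset

noncomputable def cProd {p : ℕ} [Fact p.Prime] {n : ℕ}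
    (M : Matrix (Fin n) (Fin n) ℤ_[p]) (a : ℕ) : ℤ_[p] :=
  ∏ t ∈ Finset.range a,
    if h : t + 1 < n then M ⟨t + 1, h⟩ ⟨t, Nat.lt_of_succ_lt h⟩ else 0

lemma kry_tri {p : ℕ} [Fact p.Prime] {n : ℕ} (hn : 0 < n)
    (M : Matrix (Fin n) (Fin n) ℤ_[p])
    (hHess : ∀ i j : Fin n, (j : ℕ) + 1 < (i : ℕ) → M i j = 0) :
    ∀ k (i : Fin n), k < (i : ℕ) →
      ((M ^ k) *ᵥ Pi.single (⟨0, hn⟩ : Fin n) 1) i = 0 := by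
  intro k
  induction k with
  | zero =>
    intro i hi
    rw [pow_zero, one_mulVec]
    exact Pi.single_eq_of_ne (by intro h; rw [h] at hi; simp at hi) 1
  | succ k ih =>
    intro i hi
    rw [pow_succ', ← mulVec_mulVec, mulVec, dotProduct]
    refine Finset.sum_eq_zero fun j _ => ?_
    rcases lt_or_ge ((j : ℕ) + 1) (i : ℕ) with h | h
    · rw [hHess i j h, zero_mul]
    · rw [ih j (by omega), mul_zero]

lemma kry_dvd {p : ℕ} [Fact p.Prime] {n : ℕ} (hn : 0 < n)
    (M : Matrix (Fin n) (Fin n) ℤ_[p])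
    (hHess : ∀ i j : Fin n, (j : ℕ) + 1 < (i : ℕ) → M i j = 0) :
    ∀ k (a : ℕ) (i' : Fin n), a ≤ (i' : ℕ) →
      cProd M a ∣ ((M ^ k) *ᵥ Pi.single (⟨0, hn⟩ : Fin n) 1) i' := by
  intro k
  induction k with
  | zero =>
    intro a i' ha
    rw [pow_zero, one_mulVec]
    by_cases h : i' = (⟨0, hn⟩ : Fin n)
    · have ha0 : a = 0 := by subst h; exact Nat.le_zero.mp ha
      rw [ha0, cProd]
      simp
    · rw [Pi.single_eq_of_ne h 1]; exact dvd_zero _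
  | succ k ih =>
    intro a i' ha
    rw [pow_succ', ← mulVec_mulVec, mulVec, dotProduct]
    refine Finset.dvd_sum fun j _ => ?_
    rcases lt_or_ge ((j : ℕ) + 1) (i' : ℕ) with h | h
    · rw [hHess i' j h]; exact Dvd.dvd.mul_right (dvd_zero _) _
    · rcases le_or_gt a (j : ℕ) with haj | haj
      · exact (ih a j haj).mul_left _
      · -- a > j, a ≤ i' ≤ j+1 so a = j+1 = i'
        have haj1 : a = (j : ℕ) + 1 := by omega
        have hii : (i' : ℕ) = (j : ℕ) + 1 := by omega
        have hca : cProd M a = cProd M (j : ℕ) * M i' j := by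
          rw [haj1, cProd, Finset.prod_range_succ, ← cProd]
          congr 1
          have hj1 : (j : ℕ) + 1 < n := hii ▸ i'.isLt
          rw [dif_pos hj1]
          have hi'e : i' = ⟨(j : ℕ) + 1, hj1⟩ := Fin.ext hii
          rw [hi'e]
        rw [hca, mul_comm]
        exact mul_dvd_mul (dvd_refl _) (ih (j : ℕ) j le_rfl)

lemma kry_diag {p : ℕ} [Fact p.Prime] {n : ℕ} (hn : 0 < n)
    (M : Matrix (Fin n) (Fin n) ℤ_[p])
    (hHess : ∀ i j : Fin n, (j : ℕ) + 1 < (i : ℕ) → M i j = 0) :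
    ∀ k (h : k < n),
      ((M ^ k) *ᵥ Pi.single (⟨0, hn⟩ : Fin n) 1) ⟨k, h⟩ = cProd M k := by
  intro k
  induction k with
  | zero =>
    intro h
    rw [pow_zero, one_mulVec, cProd]
    simp
  | succ k ih =>
    intro h
    have hk : k < n := Nat.lt_of_succ_lt h
    rw [pow_succ', ← mulVec_mulVec, mulVec, dotProduct]
    rw [Finset.sum_eq_single (⟨k, hk⟩ : Fin n)]
    · rw [ih hk]
      conv_rhs => rw [cProd, Finset.prod_range_succ, ← cProd, dif_pos h]
      exact mul_comm _ _
    · intro j _ hj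
      rcases lt_or_gt_of_ne (fun hv : (j : ℕ) = k => hj (Fin.ext hv)) with hl | hg
      · rw [hHess ⟨k + 1, h⟩ j (by simpa using hl), zero_mul]
      · rw [kry_tri hn M hHess k j hg, mul_zero]
    · intro hmem; exact absurd (Finset.mem_univ _) hmem

/-- for an upper Hessenberg `M ∈ M_n(ℤ_p)` the Krylov matrix
`P_M(m) = [e₁ | Me₁ | … | M^{m−1}e₁]` is upper triangular and each diagonal entry
dominates (in `p`-adic absolute value) all entries to its lower right. -/
theorem statement15 {p : ℕ} [Fact p.Prime] {n m : ℕ} (hn : 0 < n)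
    (M : Matrix (Fin n) (Fin n) ℤ_[p])
    (hHess : ∀ i j : Fin n, (j : ℕ) + 1 < (i : ℕ) → M i j = 0)
    (P : Matrix (Fin n) (Fin m) ℤ_[p])
    (hP : ∀ (i : Fin n) (j : Fin m),
      P i j = ((M ^ (j : ℕ)) *ᵥ Pi.single (⟨0, hn⟩ : Fin n) 1) i) :
    (∀ (i : Fin n) (j : Fin m), (j : ℕ) < (i : ℕ) → P i j = 0) ∧
    ∀ (i : Fin n) (hi : (i : ℕ) < m) (i' : Fin n) (j' : Fin m),
      (i : ℕ) ≤ (i' : ℕ) → (i : ℕ) ≤ (j' : ℕ) →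
      ‖P i' j'‖ ≤ ‖P i ⟨(i : ℕ), hi⟩‖ := by
  constructor
  · intro i j hj
    rw [hP i j]
    exact kry_tri hn M hHess (j : ℕ) i hj
  · intro i hi i' j' hii' hij'
    rw [hP i' j', hP i ⟨(i : ℕ), hi⟩]
    have hdiag : ((M ^ ((⟨(i : ℕ), hi⟩ : Fin m) : ℕ)) *ᵥ
        Pi.single (⟨0, hn⟩ : Fin n) 1) i = cProd M (i : ℕ) := by
      have := kry_diag hn M hHess (i : ℕ) i.isLt
      simpa using this
    rw [hdiag]
    obtain ⟨d, hd⟩ := kry_dvd hn M hHess (j' : ℕ) (i : ℕ) i' hii'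
    rw [hd, norm_mul]
    calc ‖cProd M (i : ℕ)‖ * ‖d‖ ≤ ‖cProd M (i : ℕ)‖ * 1 :=
          mul_le_mul_of_nonneg_left d.norm_le_one (norm_nonneg _)
      _ = ‖cProd M (i : ℕ)‖ := mul_one _
end

section
/- Let M ∈ M_n(Z_p) be an upper Hessenberg matrix and P_M(m) := [e_1 | M e_1 | ... | M^{m−1} e_1] for m ≤ n. Then P_M(m) admits a factorization P_M(m) = D·Q where D is a diagonal matrix over Z_p with |D_{1,1}| ≥ |D_{2,2}| ≥ ... and Q has entries in Z_p with the property that Q extends to a matrix in GL_n(Z_p) (i.e., the rows of Q are orthonormal). -/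
open Matrix

namespace Stmt16

variable {p : ℕ} [Fact p.Prime] {n : ℕ}

/-- subdiagonal entry of `M` at position `(k+1, k)` (or `0` out of range). -/
noncomputable def subd (M : Matrix (Fin n) (Fin n) ℤ_[p]) (k : ℕ) : ℤ_[p] :=
  if h : k + 1 < n then M ⟨k + 1, h⟩ ⟨k, Nat.lt_of_succ_lt h⟩ else 0

/-- product of the first `j` subdiagonal entries of `M`. -/
noncomputable def dd (M : Matrix (Fin n) (Fin n) ℤ_[p]) (j : ℕ) : ℤ_[p] :=
  ∏ k ∈ Finset.range j, subd M k

lemma vrec (hn : 0 < n) (M : Matrix (Fin n) (Fin n) ℤ_[p]) (j : ℕ) (i : Fin n) :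
    ((M ^ (j + 1)) *ᵥ Pi.single (⟨0, hn⟩ : Fin n) 1) i
      = ∑ k, M i k * ((M ^ j) *ᵥ Pi.single (⟨0, hn⟩ : Fin n) 1) k := by
  rw [pow_succ', ← mulVec_mulVec]
  rfl

lemma lemA (hn : 0 < n) (M : Matrix (Fin n) (Fin n) ℤ_[p])
    (hHess : ∀ i j : Fin n, (j : ℕ) + 1 < (i : ℕ) → M i j = 0) :
    ∀ (j : ℕ) (i : Fin n), j < (i : ℕ) →
      ((M ^ j) *ᵥ Pi.single (⟨0, hn⟩ : Fin n) 1) i = 0 := by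
  intro j
  induction j with
  | zero =>
    intro i hi
    rw [pow_zero, one_mulVec]
    exact Pi.single_eq_of_ne (Fin.ne_of_val_ne (by simpa using hi.ne')) 1
  | succ j ih =>
    intro i hi
    rw [vrec]
    apply Finset.sum_eq_zero
    intro k _
    by_cases hk : (k : ℕ) + 1 < (i : ℕ)
    · rw [hHess i k hk, zero_mul]
    · rw [ih k (by omega), mul_zero]

lemma lemB (hn : 0 < n) (M : Matrix (Fin n) (Fin n) ℤ_[p])
    (hHess : ∀ i j : Fin n, (j : ℕ) + 1 < (i : ℕ) → M i j = 0) :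
    ∀ (j : ℕ) (i : Fin n),
      dd M (i : ℕ) ∣ ((M ^ j) *ᵥ Pi.single (⟨0, hn⟩ : Fin n) 1) i := by
  intro j
  induction j with
  | zero =>
    intro i
    rcases Nat.eq_zero_or_pos (i : ℕ) with h0 | h0
    · have h1 : dd M (i : ℕ) = 1 := by rw [h0]; simp [dd]
      rw [h1]; exact one_dvd _
    · have h0' : ((M ^ 0) *ᵥ Pi.single (⟨0, hn⟩ : Fin n) 1) i = 0 := by
        rw [pow_zero, one_mulVec]
        exact Pi.single_eq_of_ne (Fin.ne_of_val_ne (by simpa using h0.ne')) 1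
      rw [h0']; exact dvd_zero _
  | succ j ih =>
    intro i
    rw [vrec]
    apply Finset.dvd_sum
    intro k _
    rcases lt_trichotomy ((k : ℕ) + 1) (i : ℕ) with hk | hk | hk
    · rw [hHess i k hk, zero_mul]; exact dvd_zero _
    · -- i = k + 1
      obtain ⟨c, hc⟩ := ih k
      have hkn : (k : ℕ) + 1 < n := by have := i.isLt; omega
      have hik : i = ⟨(k : ℕ) + 1, hkn⟩ := Fin.ext hk.symm
      have hsub : subd M (k : ℕ) = M i k := by
        rw [subd, dif_pos hkn]
        congr 1
        exact (Fin.ext hk : (⟨(k : ℕ) + 1, hkn⟩ : Fin n) = i)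
      have hdd : dd M (i : ℕ) = dd M (k : ℕ) * subd M (k : ℕ) := by
        rw [← hk, dd, dd, Finset.prod_range_succ]
      rw [hc, hdd, hsub]
      exact ⟨c, by ring⟩
    · have h1 : dd M (i : ℕ) ∣ dd M (k : ℕ) :=
        Finset.prod_dvd_prod_of_subset _ _ _ (Finset.range_subset_range.2 (by omega))
      exact (h1.trans (ih k)).mul_left _

lemma lemC (hn : 0 < n) (M : Matrix (Fin n) (Fin n) ℤ_[p])
    (hHess : ∀ i j : Fin n, (j : ℕ) + 1 < (i : ℕ) → M i j = 0) :
    ∀ (j : ℕ) (i : Fin n), (i : ℕ) = j →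
      ((M ^ j) *ᵥ Pi.single (⟨0, hn⟩ : Fin n) 1) i = dd M j := by
  intro j
  induction j with
  | zero =>
    intro i hi
    have hi0 : i = ⟨0, hn⟩ := Fin.ext hi
    rw [pow_zero, one_mulVec, hi0]
    simp [dd]
  | succ j ih =>
    intro i hi
    have hjn : j < n := by have := i.isLt; omega
    rw [vrec, Finset.sum_eq_single (⟨j, hjn⟩ : Fin n)]
    · rw [ih ⟨j, hjn⟩ rfl]
      have hin : j + 1 < n := by have := i.isLt; omega
      have hsub : M i ⟨j, hjn⟩ = subd M j := by
        rw [subd, dif_pos hin]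
        congr 1
        exact Fin.ext hi
      have hdd : dd M (j + 1) = dd M j * subd M j := Finset.prod_range_succ _ _
      rw [hdd, hsub]; ring
    · intro k _ hkne
      rcases lt_trichotomy ((k : ℕ)) j with h | h | h
      · rw [hHess i k (by omega), zero_mul]
      · exact absurd (Fin.ext h : k = ⟨j, hjn⟩) hkne
      · rw [lemA hn M hHess j k h, mul_zero]
    · intro h; exact absurd (Finset.mem_univ _) h

end Stmt16

/-- for an upper Hessenberg `M ∈ M_n(ℤ_p)` and `m ≤ n`, the Krylov matrix
`P_M(m)` factors as `P_M(m) = D ⋅ Q` with `D` diagonal with entries of decreasing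
absolute value, and `Q` the first `m` columns of a matrix in `GL_n(ℤ_p)`. -/
theorem statement16 {p : ℕ} [Fact p.Prime] {n m : ℕ} (hn : 0 < n) (hm : m ≤ n)
    (M : Matrix (Fin n) (Fin n) ℤ_[p])
    (hHess : ∀ i j : Fin n, (j : ℕ) + 1 < (i : ℕ) → M i j = 0)
    (P : Matrix (Fin n) (Fin m) ℤ_[p])
    (hP : ∀ (i : Fin n) (j : Fin m),
      P i j = ((M ^ (j : ℕ)) *ᵥ Pi.single (⟨0, hn⟩ : Fin n) 1) i) :
    ∃ (D : Matrix (Fin n) (Fin n) ℤ_[p]) (Q : Matrix (Fin n) (Fin m) ℤ_[p])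
      (Q' : Matrix (Fin n) (Fin n) ℤ_[p]),
      (∀ i j : Fin n, i ≠ j → D i j = 0) ∧
      (∀ i j : Fin n, i ≤ j → ‖D j j‖ ≤ ‖D i i‖) ∧
      P = D * Q ∧
      IsUnit Q' ∧ (∀ (i : Fin n) (j : Fin m), Q i j = Q' i (Fin.castLE hm j)) := by
  classical
  have hB := Stmt16.lemB hn M hHess
  have hA := Stmt16.lemA hn M hHess
  have hC := Stmt16.lemC hn M hHess
  set Q : Matrix (Fin n) (Fin m) ℤ_[p] :=
    fun i j => if (i : ℕ) < (j : ℕ) then (hB (j : ℕ) i).choose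
      else if (i : ℕ) = (j : ℕ) then 1 else 0 with hQdef
  set Q' : Matrix (Fin n) (Fin n) ℤ_[p] :=
    fun i j => if h : (j : ℕ) < m then Q i ⟨(j : ℕ), h⟩
      else if i = j then 1 else 0 with hQ'def
  refine ⟨Matrix.diagonal (fun i => Stmt16.dd M (i : ℕ)), Q, Q', ?_, ?_, ?_, ?_, ?_⟩
  · intro i j hij
    exact Matrix.diagonal_apply_ne _ hij
  · intro i j hij
    rw [Matrix.diagonal_apply_eq, Matrix.diagonal_apply_eq]
    obtain ⟨c, hc⟩ : Stmt16.dd M (i : ℕ) ∣ Stmt16.dd M (j : ℕ) :=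
      Finset.prod_dvd_prod_of_subset _ _ _
        (Finset.range_subset_range.2 (Fin.le_iff_val_le_val.mp hij))
    rw [hc, norm_mul]
    exact mul_le_of_le_one_right (norm_nonneg _) (PadicInt.norm_le_one _)
  · ext i j
    rw [hP, Matrix.diagonal_mul]
    simp only [hQdef]
    rcases lt_trichotomy ((i : ℕ)) ((j : ℕ)) with h | h | h
    · rw [if_pos h]
      exact (hB (j : ℕ) i).choose_spec
    · rw [if_neg (by omega : ¬ (i : ℕ) < (j : ℕ)), if_pos h, mul_one, h]
      exact hC (j : ℕ) i h
    · rw [if_neg (by omega : ¬ (i : ℕ) < (j : ℕ)),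
        if_neg (by omega : ¬ (i : ℕ) = (j : ℕ)), mul_zero]
      exact hA (j : ℕ) i h
  · -- Q' is upper triangular with 1's on the diagonal
    have htri : Q'.BlockTriangular id := by
      intro i j hij
      have hij' : (j : ℕ) < (i : ℕ) := hij
      simp only [hQ'def, hQdef]
      by_cases h : (j : ℕ) < m
      · rw [dif_pos h, if_neg (by simpa using (by omega : ¬ (i : ℕ) < (j : ℕ))),
          if_neg (by simpa using (by omega : ¬ (i : ℕ) = (j : ℕ)))]
      · rw [dif_neg h, if_neg (by exact fun hh => absurd (congrArg Fin.val hh) (by omega))]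
    have hdiag : ∀ i : Fin n, Q' i i = 1 := by
      intro i
      simp only [hQ'def, hQdef]
      by_cases h : (i : ℕ) < m
      · simp [h]
      · simp [h]
    rw [Matrix.isUnit_iff_isUnit_det, Matrix.det_of_upperTriangular htri]
    simp [hdiag]
  · intro i j
    simp only [hQ'def]
    have hjm : ((Fin.castLE hm j : Fin n) : ℕ) < m := j.isLt
    rw [dif_pos hjm]
    congr 1
end
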